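/- arXiv:1610.02432 — 2 statements merged into one kernel-verified Lean document; each statement's English description precedes it below -/
import Mathlib

section
/- Let L ∈ ℝ^{N×N} be the Laplacian of a connected weighted undirected graph (L symmetric, positive semidefinite, L𝟙_N = 0, with 0 a simple eigenvalue), let A, B ∈ ℝ^{n×n}, and assume the network is synchronized, i.e., A − λB is a Hurwitz matrix for every nonzero eigenvalue λ of L. Let π be an almost equitable partition with characteristic matrix P (so L(Im P) ⊆ Im P), and let L̂ = (PᵀP)⁻¹PᵀLP. Then the reduced network is synchronized, i.e., A − λ̂B is Hurwitz for every nonzero eigenvalue λ̂ of L̂. -/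
open Matrix Filter Topology Function
open scoped Kronecker

noncomputable section

/-- Complexification of a real matrix. -/
def cplx {α β : Type*} (M : Matrix α β ℝ) : Matrix α β ℂ := M.map Complex.ofReal

/-- Transfer function `S(s) = C (sI - A)⁻¹ B` of the system `ẋ = Ax + Bu, y = Cx`. -/
def transfer {n m p : ℕ} (A : Matrix (Fin n) (Fin n) ℝ) (B : Matrix (Fin n) (Fin m) ℝ)
    (C : Matrix (Fin p) (Fin n) ℝ) (s : ℂ) : Matrix (Fin p) (Fin m) ℂ :=
  cplx C * (s • (1 : Matrix (Fin n) (Fin n) ℂ) - cplx A)⁻¹ * cplx B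

/-- Squared H₂-norm: `(1/2π) ∫ tr(S(-iω)ᵀ S(iω)) dω`. -/
def H2normSq {α β : Type*} [Fintype α] [Fintype β] (S : ℂ → Matrix α β ℂ) : ℝ :=
  (1 / (2 * Real.pi)) *
    ∫ ω : ℝ, ((S (-((ω : ℂ) * Complex.I)))ᵀ * S ((ω : ℂ) * Complex.I)).trace.re

/-- Largest singular value of a complex matrix (its ℓ²-operator norm). -/
def sigmaMax {α β : Type*} [Fintype α] [Fintype β] [DecidableEq β] (M : Matrix α β ℂ) : ℝ :=
  ‖LinearMap.toContinuousLinearMap (Matrix.toEuclideanLin M)‖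

/-- Smallest singular value of a complex matrix: `√(λ_min(Mᴴ M))`. -/
def sigmaMinC {α β : Type*} [Fintype α] [Fintype β] [DecidableEq β] (M : Matrix α β ℂ) : ℝ :=
  Real.sqrt (sInf (spectrum ℝ (Mᴴ * M)))

/-- H∞-norm: `sup_{ω ∈ ℝ} σ_max(S(iω))`. -/
def HinfNorm {α β : Type*} [Fintype α] [Fintype β] [DecidableEq β] (S : ℂ → Matrix α β ℂ) : ℝ :=
  ⨆ ω : ℝ, sigmaMax (S ((ω : ℂ) * Complex.I))

/-- Generalized unstable subspace `X₊(A)`: direct sum of the generalized eigenspaces of (the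
complexification of) `A` corresponding to eigenvalues with nonnegative real part. -/
def unstableSubspace {n : ℕ} (A : Matrix (Fin n) (Fin n) ℝ) : Submodule ℂ (Fin n → ℂ) :=
  ⨆ μ ∈ {μ : ℂ | 0 ≤ μ.re}, Module.End.maxGenEigenspace (Matrix.toLin' (cplx A)) μ

/-- A complex square matrix is Hurwitz if all its eigenvalues have negative real part. -/
def IsHurwitz {n : ℕ} (M : Matrix (Fin n) (Fin n) ℂ) : Prop :=
  ∀ μ ∈ spectrum ℂ M, μ.re < 0

/-- Transfer function `S_λ(s) = λ (sI - A + λB)⁻¹ E` of the auxiliary system. -/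
def auxS {n r : ℕ} (A B : Matrix (Fin n) (Fin n) ℝ) (E : Matrix (Fin n) (Fin r) ℝ)
    (lam : ℝ) (s : ℂ) : Matrix (Fin n) (Fin r) ℂ :=
  (lam : ℂ) • ((s • (1 : Matrix (Fin n) (Fin n) ℂ) - cplx A + (lam : ℂ) • cplx B)⁻¹ * cplx E)

/-- Transfer function `S(s) = (L⊗Iₙ)(sI - I_N⊗A + L⊗B)⁻¹(M⊗E)` of the original network. -/
def netS {N n r m : ℕ} (L : Matrix (Fin N) (Fin N) ℝ) (A B : Matrix (Fin n) (Fin n) ℝ)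
    (E : Matrix (Fin n) (Fin r) ℝ) (M : Matrix (Fin N) (Fin m) ℝ) (s : ℂ) :
    Matrix (Fin N × Fin n) (Fin m × Fin r) ℂ :=
  cplx (L ⊗ₖ (1 : Matrix (Fin n) (Fin n) ℝ)) *
    (s • (1 : Matrix (Fin N × Fin n) (Fin N × Fin n) ℂ) -
      cplx ((1 : Matrix (Fin N) (Fin N) ℝ) ⊗ₖ A - L ⊗ₖ B))⁻¹ *
    cplx (M ⊗ₖ E)

/-- Transfer function `Ŝ(s) = (LP⊗Iₙ)(sI - I_k⊗A + L̂⊗B)⁻¹(M̂⊗E)` of the reduced network. -/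
def netShat {N n r m k : ℕ} (L : Matrix (Fin N) (Fin N) ℝ) (P : Matrix (Fin N) (Fin k) ℝ)
    (Lhat : Matrix (Fin k) (Fin k) ℝ) (Mhat : Matrix (Fin k) (Fin m) ℝ)
    (A B : Matrix (Fin n) (Fin n) ℝ) (E : Matrix (Fin n) (Fin r) ℝ) (s : ℂ) :
    Matrix (Fin N × Fin n) (Fin m × Fin r) ℂ :=
  cplx ((L * P) ⊗ₖ (1 : Matrix (Fin n) (Fin n) ℝ)) *
    (s • (1 : Matrix (Fin k × Fin n) (Fin k × Fin n) ℂ) -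
      cplx ((1 : Matrix (Fin k) (Fin k) ℝ) ⊗ₖ A - Lhat ⊗ₖ B))⁻¹ *
    cplx (Mhat ⊗ₖ E)

/-- Transfer function `S(s) = L (sI + L)⁻¹ M` of the single-integrator network. -/
def singleS {N m : ℕ} (L : Matrix (Fin N) (Fin N) ℝ) (M : Matrix (Fin N) (Fin m) ℝ)
    (s : ℂ) : Matrix (Fin N) (Fin m) ℂ :=
  cplx L * (s • (1 : Matrix (Fin N) (Fin N) ℂ) + cplx L)⁻¹ * cplx M

/-- Transfer function `Ŝ(s) = LP (sI + L̂)⁻¹ M̂` of the reduced single-integrator network. -/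
def singleShat {N m k : ℕ} (L : Matrix (Fin N) (Fin N) ℝ) (P : Matrix (Fin N) (Fin k) ℝ)
    (Lhat : Matrix (Fin k) (Fin k) ℝ) (Mhat : Matrix (Fin k) (Fin m) ℝ) (s : ℂ) :
    Matrix (Fin N) (Fin m) ℂ :=
  cplx (L * P) * (s • (1 : Matrix (Fin k) (Fin k) ℂ) + cplx Lhat)⁻¹ * cplx Mhat

/-- Squared Frobenius norm `‖M‖_F² = tr(MᵀM)`. -/
def frobSq {α β : Type*} [Fintype α] [Fintype β] (M : Matrix α β ℝ) : ℝ := (Mᵀ * M).trace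

end

/-!
Since `L` leaves `Im P` invariant and `(PᵀP)⁻¹Pᵀ` is a left inverse of `P`, the reduced
Laplacian satisfies `L P = P L̂`. As `P` is injective, it carries eigenvectors of `L̂` to
eigenvectors of `L` with the same eigenvalue, so every eigenvalue of `L̂` is one of `L`, and the
synchronization hypothesis applies to it.
-/

theorem cplx_mul {l m n : Type*} [Fintype m] (M : Matrix l m ℝ) (N : Matrix m n ℝ) :
    cplx (M * N) = cplx M * cplx N :=
  Matrix.map_mul (f := Complex.ofRealHom)

/-- The characteristic matrix of the partition of `m` into the fibres of `c`. -/
def partitionMatrix (R : Type*) [Zero R] [One R] {m k : Type*} [DecidableEq k] (c : m → k) :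
    Matrix m k R :=
  of fun i j => if c i = j then 1 else 0

section partitionMatrix

variable {R m k : Type*} [Semiring R] [Fintype k] [DecidableEq k]

theorem partitionMatrix_mulVec (c : m → k) (v : k → R) :
    partitionMatrix R c *ᵥ v = v ∘ c := by
  ext i
  simp [partitionMatrix, mulVec, dotProduct]

theorem partitionMatrix_mulVec_injective {c : m → k} (hc : Surjective c) :
    Injective (partitionMatrix R c).mulVec := by
  intro v w h
  rw [partitionMatrix_mulVec, partitionMatrix_mulVec] at h
  exact hc.injective_comp_right h

end partitionMatrix

theorem cplx_partitionMatrix {m k : Type*} [DecidableEq k] (c : m → k) :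
    cplx (partitionMatrix ℝ c) = partitionMatrix ℂ c := by
  ext i j
  simp [cplx, partitionMatrix, apply_ite Complex.ofReal]

theorem isUnit_transpose_mul_self {R m k : Type*} [Field R] [LinearOrder R] [IsStrictOrderedRing R]
    [Fintype m] [Fintype k] [DecidableEq k] {P : Matrix m k R} (hP : Injective P.mulVec) :
    IsUnit (Pᵀ * P) := by
  rw [← mulVec_injective_iff_isUnit, ← coe_mulVecLin, ← LinearMap.ker_eq_bot,
    ker_mulVecLin_transpose_mul_self, LinearMap.ker_eq_bot]
  exact hP

theorem mul_eq_mul_mul_of_map_range_le {R m k : Type*} [CommRing R] [Fintype m] [Fintype k]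
    [DecidableEq k] {L : Matrix m m R} {P : Matrix m k R} {Y : Matrix k m R} (hYP : Y * P = 1)
    (hL : Submodule.map L.mulVecLin (LinearMap.range P.mulVecLin) ≤ LinearMap.range P.mulVecLin) :
    L * P = P * (Y * L * P) := by
  rw [ext_iff_mulVec]
  intro v
  obtain ⟨w, hw⟩ := hL ⟨P *ᵥ v, ⟨v, rfl⟩, rfl⟩
  simp only [mulVecLin_apply] at hw
  simp only [← mulVec_mulVec, ← hw]
  rw [mulVec_mulVec _ Y P, hYP, one_mulVec]

theorem spectrum_subset_of_mul_eq_mul {K m k : Type*} [Field K] [Fintype m] [DecidableEq m]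
    [Fintype k] [DecidableEq k] {M : Matrix m m K} {M' : Matrix k k K} {X : Matrix m k K}
    (hX : Injective X.mulVec) (h : M * X = X * M') : spectrum K M' ⊆ spectrum K M := by
  intro μ hμ
  rw [spectrum.mem_iff] at hμ ⊢
  contrapose! hμ
  have hcomm : (algebraMap K _ μ - M) * X = X * (algebraMap K _ μ - M') := by
    simp only [Algebra.algebraMap_eq_smul_one, Matrix.sub_mul, Matrix.mul_sub, h, Matrix.smul_mul,
      Matrix.mul_smul, Matrix.one_mul, Matrix.mul_one]
  rw [← mulVec_injective_iff_isUnit] at hμ ⊢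
  refine Injective.of_comp (f := X.mulVec) ?_
  have hconj :
      X.mulVec ∘ (algebraMap K _ μ - M').mulVec = (algebraMap K _ μ - M).mulVec ∘ X.mulVec :=
    funext fun v => by simp only [Function.comp_apply, mulVec_mulVec, hcomm]
  rw [hconj]
  exact hμ.comp hX

theorem stmt6_general {N k n : ℕ} (L : Matrix (Fin N) (Fin N) ℝ)
    (A B : Matrix (Fin n) (Fin n) ℝ)
    (hsync : ∀ μ ∈ spectrum ℂ (cplx L), μ ≠ 0 → IsHurwitz (cplx A - μ • cplx B))
    (c : Fin N → Fin k) (hc : Function.Surjective c)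
    (P : Matrix (Fin N) (Fin k) ℝ)
    (hP : P = Matrix.of fun i j => if c i = j then 1 else 0)
    (hAEP : Submodule.map L.mulVecLin (LinearMap.range P.mulVecLin) ≤
      LinearMap.range P.mulVecLin)
    (Lhat : Matrix (Fin k) (Fin k) ℝ) (hLhat : Lhat = (Pᵀ * P)⁻¹ * (Pᵀ * L * P)) :
    ∀ μ ∈ spectrum ℂ (cplx Lhat), μ ≠ 0 → IsHurwitz (cplx A - μ • cplx B) := by
  intro μ hμ hμ0
  change P = partitionMatrix ℝ c at hP
  have hPinj : Injective P.mulVec := hP ▸ partitionMatrix_mulVec_injective hc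
  have hleftInv : (Pᵀ * P)⁻¹ * Pᵀ * P = 1 := by
    rw [Matrix.mul_assoc,
      nonsing_inv_mul _ ((isUnit_iff_isUnit_det _).mp (isUnit_transpose_mul_self hPinj))]
  have hLP : L * P = P * Lhat := by
    rw [hLhat, mul_eq_mul_mul_of_map_range_le hleftInv hAEP]
    simp only [Matrix.mul_assoc]
  have hcplxP : Injective (cplx P).mulVec := by
    rw [hP, cplx_partitionMatrix]
    exact partitionMatrix_mulVec_injective hc
  refine hsync μ (spectrum_subset_of_mul_eq_mul hcplxP ?_ hμ) hμ0
  rw [← cplx_mul, ← cplx_mul, hLP]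

/-- clustering a synchronized network according to an almost equitable
partition preserves synchronization: `A − λ̂B` is Hurwitz for every nonzero eigenvalue
`λ̂` of the reduced Laplacian `L̂`. -/
theorem stmt6 {N k n : ℕ} (L : Matrix (Fin N) (Fin N) ℝ)
    (hLpsd : L.PosSemidef) (hL1 : L.mulVec (fun _ => 1) = 0)
    (hLker : LinearMap.ker L.mulVecLin = Submodule.span ℝ {(fun _ => 1 : Fin N → ℝ)})
    (A B : Matrix (Fin n) (Fin n) ℝ)
    (hsync : ∀ μ ∈ spectrum ℂ (cplx L), μ ≠ 0 → IsHurwitz (cplx A - μ • cplx B))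
    (c : Fin N → Fin k) (hc : Function.Surjective c)
    (P : Matrix (Fin N) (Fin k) ℝ)
    (hP : P = Matrix.of fun i j => if c i = j then 1 else 0)
    (hAEP : Submodule.map L.mulVecLin (LinearMap.range P.mulVecLin) ≤
      LinearMap.range P.mulVecLin)
    (Lhat : Matrix (Fin k) (Fin k) ℝ) (hLhat : Lhat = (Pᵀ * P)⁻¹ * (Pᵀ * L * P)) :
    ∀ μ ∈ spectrum ℂ (cplx Lhat), μ ≠ 0 → IsHurwitz (cplx A - μ • cplx B) :=
  stmt6_general L A B hsync c hc P hP hAEP Lhat hLhat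
end

section
/- Let L ∈ ℝ^{N×N} be symmetric positive semidefinite with L𝟙_N = 0, let π be a partition of {1,…,N} with characteristic matrix P ∈ ℝ^{N×k}, let M ∈ ℝ^{N×m} have columns e_{v₁},…,e_{v_m} for distinct nodes v₁,…,v_m, and set 𝒫 = P(PᵀP)⁻¹Pᵀ, L̂ = (PᵀP)⁻¹PᵀLP, M̂ = (PᵀP)⁻¹PᵀM, L_AEP = 𝒫L𝒫 + (I_N − 𝒫)L(I_N − 𝒫), and ΔL = L − L_AEP. Then: (i) L̂_AEP := (PᵀP)⁻¹PᵀL_AEP P = L̂ and L_AEP P = PL̂; (ii) the reduced transfer functions Ŝ(s) = LP(sI + L̂)⁻¹M̂ and Ŝ_AEP(s) = L_AEP P(sI + L̂)⁻¹M̂ satisfy Ŝ(s) − Ŝ_AEP(s) = (LP − PL̂)(sI + L̂)⁻¹M̂, (LP − PL̂)ᵀ(LP − PL̂) = Pᵀ(ΔL)²P, and hence σ_max(Ŝ(iω) − Ŝ_AEP(iω)) ≤ σ_max(ΔL·P(iωI + L̂)⁻¹M̂) for every ω ∈ ℝ for which iωI + L̂ is invertible. -/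
open Matrix Filter Topology Function
open scoped Kronecker

/-!
Since `𝒫` fixes `Im P`, only the block `𝒫 L 𝒫` of `L_AEP` survives on `Im P`, so
`L_AEP P = 𝒫 L P = P L̂`. Hence `ΔL P = L P - P L̂`, which turns the difference of the reduced
transfer functions into `ΔL P (sI + L̂)⁻¹ M̂`; and `ΔL` is symmetric, which gives the Gram
identity `(ΔL P)ᵀ (ΔL P) = Pᵀ ΔL² P`.
-/

lemma cplx_sub {α β : Type*} (A B : Matrix α β ℝ) : cplx (A - B) = cplx A - cplx B := by
  ext i j; simp [cplx]

lemma cplx_mul_s19 {α β γ : Type*} [Fintype β] (A : Matrix α β ℝ) (B : Matrix β γ ℝ) :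
    cplx (A * B) = cplx A * cplx B := by
  ext i j; simp [cplx, Matrix.mul_apply]

lemma singleShat_sub_singleShat {N m k : ℕ} (L L' : Matrix (Fin N) (Fin N) ℝ)
    (P : Matrix (Fin N) (Fin k) ℝ) (Lhat : Matrix (Fin k) (Fin k) ℝ)
    (Mhat : Matrix (Fin k) (Fin m) ℝ) (s : ℂ) :
    singleShat L P Lhat Mhat s - singleShat L' P Lhat Mhat s =
      cplx (L * P - L' * P) *
        (s • (1 : Matrix (Fin k) (Fin k) ℂ) + cplx Lhat)⁻¹ * cplx Mhat := by
  rw [singleShat, singleShat, cplx_sub, Matrix.sub_mul, Matrix.sub_mul]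

section Projector

variable {R n k : Type*} [CommRing R] [Fintype n] [DecidableEq k]

lemma transpose_mul_self_of_indicator (c : n → k) :
    (of fun i j => if c i = j then (1 : R) else 0)ᵀ *
        (of fun i j => if c i = j then (1 : R) else 0) =
      diagonal fun j => ((Finset.univ.filter fun i => c i = j).card : R) := by
  ext a b
  simp only [Matrix.mul_apply, transpose_apply, of_apply, diagonal_apply, mul_ite, mul_one,
    mul_zero]
  split_ifs with hab
  · subst hab
    simp [Finset.sum_ite, Finset.filter_filter]
  · exact Finset.sum_eq_zero fun i _ => by split_ifs with h₁ h₂ <;> simp_all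

lemma isUnit_det_transpose_mul_self_of_indicator [Fintype k] {K : Type*} [Field K] [CharZero K]
    {c : n → k} (hc : Surjective c) :
    IsUnit ((of fun i j => if c i = j then (1 : K) else 0)ᵀ *
      (of fun i j => if c i = j then (1 : K) else 0)).det := by
  rw [transpose_mul_self_of_indicator, det_diagonal]
  refine (Finset.prod_ne_zero_iff.2 fun j _ => ?_).isUnit
  obtain ⟨i, rfl⟩ := hc j
  exact_mod_cast Finset.card_ne_zero.2 ⟨i, by simp⟩

variable [Fintype k] (P : Matrix n k R)

lemma isSymm_projector : (P * (Pᵀ * P)⁻¹ * Pᵀ).IsSymm := by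
  rw [IsSymm, transpose_mul, transpose_mul, transpose_transpose, transpose_nonsing_inv,
    transpose_mul, transpose_transpose, Matrix.mul_assoc]

variable {P}

lemma projector_mul_self (hP : IsUnit (Pᵀ * P).det) : P * (Pᵀ * P)⁻¹ * Pᵀ * P = P := by
  rw [Matrix.mul_assoc _ Pᵀ, Matrix.mul_assoc, nonsing_inv_mul _ hP, Matrix.mul_one]

lemma inv_transpose_mul_self_mul_eq_of_mul_eq (hP : IsUnit (Pᵀ * P).det)
    {X : Matrix n n R} {Y : Matrix k k R} (h : X * P = P * Y) :
    (Pᵀ * P)⁻¹ * (Pᵀ * X * P) = Y := by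
  rw [Matrix.mul_assoc Pᵀ, h, ← Matrix.mul_assoc Pᵀ, ← Matrix.mul_assoc,
    nonsing_inv_mul _ hP, Matrix.one_mul]

end Projector

section Sandwich

variable {R n : Type*} [CommRing R] [Fintype n]

lemma sandwich_add_sandwich_compl_mul_of_mul_eq [DecidableEq n] {k : Type*} {Q L : Matrix n n R}
    {P : Matrix n k R} (hQP : Q * P = P) :
    (Q * L * Q + (1 - Q) * L * (1 - Q)) * P = Q * L * P := by
  have hcompl : (1 - Q) * P = 0 := by rw [Matrix.sub_mul, Matrix.one_mul, hQP, sub_self]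
  rw [Matrix.add_mul, Matrix.mul_assoc _ (1 - Q), hcompl, Matrix.mul_zero, add_zero,
    Matrix.mul_assoc _ Q, hQP]

lemma isSymm_mul_mul_of_isSymm {Q L : Matrix n n R} (hQ : Q.IsSymm) (hL : L.IsSymm) :
    (Q * L * Q).IsSymm := by
  rw [IsSymm, transpose_mul, transpose_mul, hQ.eq, hL.eq, Matrix.mul_assoc]

lemma isSymm_sandwich_add_sandwich_compl [DecidableEq n] {Q L : Matrix n n R} (hQ : Q.IsSymm)
    (hL : L.IsSymm) :
    (Q * L * Q + (1 - Q) * L * (1 - Q)).IsSymm :=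
  (isSymm_mul_mul_of_isSymm hQ hL).add (isSymm_mul_mul_of_isSymm (isSymm_one.sub hQ) hL)

lemma transpose_mul_mul_self_of_isSymm {k : Type*} {D : Matrix n n R} (hD : D.IsSymm)
    (P : Matrix n k R) : (D * P)ᵀ * (D * P) = Pᵀ * (D * D) * P := by
  rw [transpose_mul, hD.eq]
  simp only [Matrix.mul_assoc]

end Sandwich

theorem stmt19_general {N k m : ℕ} (L : Matrix (Fin N) (Fin N) ℝ)
    (hLsymm : L.IsSymm)
    (c : Fin N → Fin k) (hc : Function.Surjective c)
    (P : Matrix (Fin N) (Fin k) ℝ)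
    (hP : P = Matrix.of fun i j => if c i = j then 1 else 0)
    (Proj : Matrix (Fin N) (Fin N) ℝ) (hProj : Proj = P * (Pᵀ * P)⁻¹ * Pᵀ)
    (Lhat : Matrix (Fin k) (Fin k) ℝ) (hLhat : Lhat = (Pᵀ * P)⁻¹ * (Pᵀ * L * P))
    (Mhat : Matrix (Fin k) (Fin m) ℝ)
    (LAEP : Matrix (Fin N) (Fin N) ℝ)
    (hLAEP : LAEP = Proj * L * Proj +
      ((1 : Matrix (Fin N) (Fin N) ℝ) - Proj) * L * ((1 : Matrix (Fin N) (Fin N) ℝ) - Proj))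
    (DL : Matrix (Fin N) (Fin N) ℝ) (hDL : DL = L - LAEP) :
    (Pᵀ * P)⁻¹ * (Pᵀ * LAEP * P) = Lhat ∧
    LAEP * P = P * Lhat ∧
    (∀ s : ℂ, singleShat L P Lhat Mhat s - singleShat LAEP P Lhat Mhat s =
      cplx (L * P - P * Lhat) *
        (s • (1 : Matrix (Fin k) (Fin k) ℂ) + cplx Lhat)⁻¹ * cplx Mhat) ∧
    (L * P - P * Lhat)ᵀ * (L * P - P * Lhat) = Pᵀ * (DL * DL) * P ∧
    (∀ ω : ℝ,
      IsUnit (((ω : ℂ) * Complex.I) • (1 : Matrix (Fin k) (Fin k) ℂ) + cplx Lhat) →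
      sigmaMax (singleShat L P Lhat Mhat ((ω : ℂ) * Complex.I) -
          singleShat LAEP P Lhat Mhat ((ω : ℂ) * Complex.I)) ≤
        sigmaMax (cplx DL * cplx P *
          (((ω : ℂ) * Complex.I) • (1 : Matrix (Fin k) (Fin k) ℂ) + cplx Lhat)⁻¹ *
          cplx Mhat)) := by
  have hunit : IsUnit (Pᵀ * P).det := hP ▸ isUnit_det_transpose_mul_self_of_indicator hc
  have hAEP : LAEP * P = P * Lhat := by
    rw [hLAEP, sandwich_add_sandwich_compl_mul_of_mul_eq (hProj ▸ projector_mul_self hunit),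
      hProj, hLhat]
    simp only [Matrix.mul_assoc]
  have hDLP : DL * P = L * P - P * Lhat := by rw [hDL, Matrix.sub_mul, hAEP]
  have hDLsymm : DL.IsSymm :=
    hDL ▸ hLAEP ▸
      hLsymm.sub (isSymm_sandwich_add_sandwich_compl (hProj ▸ isSymm_projector P) hLsymm)
  have hS (s : ℂ) : singleShat L P Lhat Mhat s - singleShat LAEP P Lhat Mhat s =
      cplx (L * P - P * Lhat) *
        (s • (1 : Matrix (Fin k) (Fin k) ℂ) + cplx Lhat)⁻¹ * cplx Mhat := by
    rw [singleShat_sub_singleShat, hAEP]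
  refine ⟨inv_transpose_mul_self_mul_eq_of_mul_eq hunit hAEP, hAEP, hS,
    hDLP ▸ transpose_mul_mul_self_of_isSymm hDLsymm P, fun ω _ => ?_⟩
  rw [hS, ← hDLP, cplx_mul_s19]

/-- properties of the approximating Laplacian `L_AEP` and of the difference
of the reduced transfer functions. -/
theorem stmt19 {N k m : ℕ} (L : Matrix (Fin N) (Fin N) ℝ)
    (hLsymm : L.IsSymm) (hLpsd : L.PosSemidef) (hL1 : L.mulVec (fun _ => 1) = 0)
    (c : Fin N → Fin k) (hc : Function.Surjective c)
    (P : Matrix (Fin N) (Fin k) ℝ)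
    (hP : P = Matrix.of fun i j => if c i = j then 1 else 0)
    (v : Fin m → Fin N) (hv : Function.Injective v)
    (M : Matrix (Fin N) (Fin m) ℝ)
    (hM : M = Matrix.of fun i j => if i = v j then 1 else 0)
    (Proj : Matrix (Fin N) (Fin N) ℝ) (hProj : Proj = P * (Pᵀ * P)⁻¹ * Pᵀ)
    (Lhat : Matrix (Fin k) (Fin k) ℝ) (hLhat : Lhat = (Pᵀ * P)⁻¹ * (Pᵀ * L * P))
    (Mhat : Matrix (Fin k) (Fin m) ℝ) (hMhat : Mhat = (Pᵀ * P)⁻¹ * (Pᵀ * M))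
    (LAEP : Matrix (Fin N) (Fin N) ℝ)
    (hLAEP : LAEP = Proj * L * Proj +
      ((1 : Matrix (Fin N) (Fin N) ℝ) - Proj) * L * ((1 : Matrix (Fin N) (Fin N) ℝ) - Proj))
    (DL : Matrix (Fin N) (Fin N) ℝ) (hDL : DL = L - LAEP) :
    (Pᵀ * P)⁻¹ * (Pᵀ * LAEP * P) = Lhat ∧
    LAEP * P = P * Lhat ∧
    (∀ s : ℂ, singleShat L P Lhat Mhat s - singleShat LAEP P Lhat Mhat s =
      cplx (L * P - P * Lhat) *
        (s • (1 : Matrix (Fin k) (Fin k) ℂ) + cplx Lhat)⁻¹ * cplx Mhat) ∧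
    (L * P - P * Lhat)ᵀ * (L * P - P * Lhat) = Pᵀ * (DL * DL) * P ∧
    (∀ ω : ℝ,
      IsUnit (((ω : ℂ) * Complex.I) • (1 : Matrix (Fin k) (Fin k) ℂ) + cplx Lhat) →
      sigmaMax (singleShat L P Lhat Mhat ((ω : ℂ) * Complex.I) -
          singleShat LAEP P Lhat Mhat ((ω : ℂ) * Complex.I)) ≤
        sigmaMax (cplx DL * cplx P *
          (((ω : ℂ) * Complex.I) • (1 : Matrix (Fin k) (Fin k) ℂ) + cplx Lhat)⁻¹ *
          cplx Mhat)) :=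
  stmt19_general L hLsymm c hc P hP Proj hProj Lhat hLhat Mhat LAEP hLAEP DL hDL
end
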